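/- Let θ ≥ 1 and let f be a path flow that is θ-UNE or θ-EF. Fix a commodity k with demand d_k and consider the random variable X that equals ℓ_p(f) with probability f_p^k/d_k for each used path p ∈ P^k (this is the latency experienced by a user of commodity k under randomized routing). Then E[X] = (Σ_{p used} f_p^k·ℓ_p(f))/d_k, and provided the minimum used-path latency is positive, the standard deviation of X is at most ((θ − 1)/(2√θ))·E[X]; this follows from the Bhatia–Davis inequality Var(X) ≤ (L − μ)(μ − l), where l and L are the minimum and maximum used-path latencies of commodity k, μ = E[X], and L ≤ θ·l. -/
import Mathlib


open scoped BigOperators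

set_option maxHeartbeats 1000000

/-- A routing instance: a finite directed (multi)graph given by source/target maps
on edges, a finite set of commodities with sources, sinks, demands, and
load-dependent latency functions on edges. -/
structure RoutingInstance (V E K : Type*) where
  src : E → V
  tgt : E → V
  source : K → V
  sink : K → V
  demand : K → ℝ
  latency : E → ℝ → ℝ

namespace RoutingInstance

variable {V E K : Type*} [Fintype V] [Fintype E] [Fintype K] [DecidableEq E]

/-- Standard assumptions: positive demands, latencies nonnegative and
nondecreasing on `[0, ∞)`. -/
def Standard (G : RoutingInstance V E K) : Prop :=
  (∀ k, 0 < G.demand k) ∧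
  (∀ e x, (0:ℝ) ≤ x → 0 ≤ G.latency e x) ∧
  (∀ e, MonotoneOn (G.latency e) (Set.Ici (0:ℝ)))

/-- `G.IsWalkFrom s t l` : the list of edges `l` is a directed walk from `s` to `t`. -/
def IsWalkFrom (G : RoutingInstance V E K) : V → V → List E → Prop
  | s, t, [] => s = t
  | s, t, e :: es => G.src e = s ∧ IsWalkFrom G (G.tgt e) t es

/-- The list of vertices visited by a walk starting at `s`. -/
def walkVerts (G : RoutingInstance V E K) (s : V) (l : List E) : List V :=
  s :: l.map G.tgt

/-- A simple directed path from the source of commodity `k` to its sink. -/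
def IsPathOf (G : RoutingInstance V E K) (k : K) (p : List E) : Prop :=
  G.IsWalkFrom (G.source k) (G.sink k) p ∧ (G.walkVerts (G.source k) p).Nodup

/-- A feasible path flow: nonnegative, supported on simple `s_k`-`t_k` paths,
and routing the whole demand of each commodity. -/
def Feasible (G : RoutingInstance V E K) (f : K → (List E →₀ ℝ)) : Prop :=
  (∀ k p, 0 ≤ f k p) ∧
  (∀ k p, f k p ≠ 0 → G.IsPathOf k p) ∧
  (∀ k, ((f k).sum fun _ v => v) = G.demand k)

/-- Edge flow of commodity `k` induced by a path flow. -/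
def edgeFlowK (G : RoutingInstance V E K) (f : K → (List E →₀ ℝ)) (k : K) (e : E) : ℝ :=
  (f k).sum fun p v => if e ∈ p then v else 0

/-- Total edge flow induced by a path flow. -/
def edgeFlow (G : RoutingInstance V E K) (f : K → (List E →₀ ℝ)) (e : E) : ℝ :=
  ∑ k, G.edgeFlowK f k e

/-- Latency (cost) of a path under the edge flows induced by the path flow `f`. -/
def pathCost (G : RoutingInstance V E K) (f : K → (List E →₀ ℝ)) (p : List E) : ℝ :=
  (p.map fun e => G.latency e (G.edgeFlow f e)).sum

/-- A path is used by commodity `k` if it carries positive flow in `f`. -/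
def Used (G : RoutingInstance V E K) (f : K → (List E →₀ ℝ)) (k : K) (p : List E) : Prop :=
  0 < f k p

/-- A path is positive for commodity `k` if each of its edges carries positive
commodity-`k` flow. -/
def PositivePath (G : RoutingInstance V E K) (f : K → (List E →₀ ℝ)) (k : K) (p : List E) :
    Prop :=
  G.IsPathOf k p ∧ ∀ e ∈ p, 0 < G.edgeFlowK f k e

/-- θ-Positive Nash Equilibrium (a property of the induced edge flow):
every positive path costs at most θ times any path of the same commodity. -/
def IsPNE (G : RoutingInstance V E K) (θ : ℝ) (f : K → (List E →₀ ℝ)) : Prop :=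
  ∀ k p q, G.PositivePath f k p → G.IsPathOf k q →
    G.pathCost f p ≤ θ * G.pathCost f q

/-- θ-Used Nash Equilibrium: every used path costs at most θ times any path
of the same commodity. -/
def IsUNE (G : RoutingInstance V E K) (θ : ℝ) (f : K → (List E →₀ ℝ)) : Prop :=
  ∀ k p q, G.Used f k p → G.IsPathOf k q →
    G.pathCost f p ≤ θ * G.pathCost f q

/-- θ-Envy Free: every used path costs at most θ times any used path
of the same commodity. -/
def IsEF (G : RoutingInstance V E K) (θ : ℝ) (f : K → (List E →₀ ℝ)) : Prop :=
  ∀ k p q, G.Used f k p → G.Used f k q →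
    G.pathCost f p ≤ θ * G.pathCost f q

/-- Social cost of a path flow. -/
def socialCost (G : RoutingInstance V E K) (f : K → (List E →₀ ℝ)) : ℝ :=
  ∑ e, G.edgeFlow f e * G.latency e (G.edgeFlow f e)

end RoutingInstance

open RoutingInstance in
/-- Randomized routing.  Let f be θ-UNE or θ-EF, and consider for a
commodity k the random latency X taking value ℓ_p(f) with probability f_p^k/d_k for
each used path p.  Its mean is μ = (Σ_p f_p^k ℓ_p(f))/d_k, and provided every used
path of commodity k has positive latency, its standard deviation is at most
((θ − 1)/(2√θ))·μ. -/
theorem stmt_19 {V E K : Type*} [Fintype V] [Fintype E] [Fintype K] [DecidableEq E]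
    (G : RoutingInstance V E K) (hG : G.Standard)
    (θ : ℝ) (hθ : 1 ≤ θ)
    (f : K → (List E →₀ ℝ)) (hf : G.Feasible f)
    (hflow : G.IsUNE θ f ∨ G.IsEF θ f)
    (k : K)
    (hminpos : ∀ p, G.Used f k p → 0 < G.pathCost f p)
    (μ v : ℝ)
    (hμ : μ = (∑ p ∈ (f k).support, f k p * G.pathCost f p) / G.demand k)
    (hv : v = (∑ p ∈ (f k).support, f k p * (G.pathCost f p - μ) ^ 2) / G.demand k) :
    Real.sqrt v ≤ ((θ - 1) / (2 * Real.sqrt θ)) * μ := by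
  obtain ⟨hd, -, -⟩ := hG
  obtain ⟨hnn, hpath, hsum⟩ := hf
  set S := (f k).support with hS
  set d := G.demand k with hdk
  set c := G.pathCost f with hc
  have hdpos : 0 < d := hd k
  have hwsum : ∑ p ∈ S, f k p = d := by simpa [Finsupp.sum] using hsum k
  have hwpos : ∀ p ∈ S, 0 < f k p := fun p hp =>
    lt_of_le_of_ne (hnn k p) (Ne.symm (Finsupp.mem_support_iff.mp hp))
  have hSne : S.Nonempty := by
    by_contra h
    rw [Finset.not_nonempty_iff_eq_empty] at h
    rw [h, Finset.sum_empty] at hwsum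
    linarith
  have hcmp : ∀ p ∈ S, ∀ q ∈ S, c p ≤ θ * c q := by
    intro p hp q hq
    have hup : G.Used f k p := hwpos p hp
    rcases hflow with h | h
    · exact h k p q hup (hpath k q (Finsupp.mem_support_iff.mp hq))
    · exact h k p q hup (hwpos q hq)
  have hcpos : ∀ p ∈ S, 0 < c p := fun p hp => hminpos p (hwpos p hp)
  set l := S.inf' hSne c with hl
  set L := S.sup' hSne c with hL
  obtain ⟨p0, hp0, hlp0⟩ := S.exists_mem_eq_inf' hSne c
  obtain ⟨q0, hq0, hLq0⟩ := S.exists_mem_eq_sup' hSne c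
  have hlpos : 0 < l := by rw [hl, hlp0]; exact hcpos p0 hp0
  have hLl : L ≤ θ * l := by rw [hL, hl, hLq0, hlp0]; exact hcmp q0 hq0 p0 hp0
  have hlc : ∀ p ∈ S, l ≤ c p := fun p hp => Finset.inf'_le c hp
  have hcL : ∀ p ∈ S, c p ≤ L := fun p hp => Finset.le_sup' c hp
  clear_value l L
  have hμc : ∑ p ∈ S, f k p * c p = d * μ := by
    rw [hμ]; field_simp
  have hlμ : l ≤ μ := by
    have h1 : d * l ≤ d * μ := by
      rw [← hμc, ← hwsum, Finset.sum_mul]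
      exact Finset.sum_le_sum fun p hp =>
        mul_le_mul_of_nonneg_left (hlc p hp) (hwpos p hp).le
    exact le_of_mul_le_mul_left h1 hdpos
  have hμL : μ ≤ L := by
    have h1 : d * μ ≤ d * L := by
      rw [← hμc, ← hwsum, Finset.sum_mul]
      exact Finset.sum_le_sum fun p hp =>
        mul_le_mul_of_nonneg_left (hcL p hp) (hwpos p hp).le
    exact le_of_mul_le_mul_left h1 hdpos
  -- Bhatia–Davis
  have hident : ∑ p ∈ S, f k p * ((c p - μ) ^ 2 + (L - c p) * (c p - l))
      = d * ((L - μ) * (μ - l)) := by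
    have h1 : ∀ p ∈ S, f k p * ((c p - μ) ^ 2 + (L - c p) * (c p - l))
        = (L + l - 2 * μ) * (f k p * c p) + (μ ^ 2 - L * l) * f k p := by
      intro p _; ring
    rw [Finset.sum_congr rfl h1, Finset.sum_add_distrib, ← Finset.mul_sum,
      ← Finset.mul_sum, hμc, hwsum]
    ring
  have hBD : ∑ p ∈ S, f k p * (c p - μ) ^ 2 ≤ d * ((L - μ) * (μ - l)) := by
    rw [← hident]
    refine Finset.sum_le_sum fun p hp => ?_
    have h0 : 0 ≤ f k p * ((L - c p) * (c p - l)) :=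
      mul_nonneg (hwpos p hp).le
        (mul_nonneg (sub_nonneg.2 (hcL p hp)) (sub_nonneg.2 (hlc p hp)))
    nlinarith [h0]
  have hvle : v ≤ (L - μ) * (μ - l) := by
    rw [hv, div_le_iff₀ hdpos]
    calc (∑ p ∈ S, f k p * (c p - μ) ^ 2) ≤ d * ((L - μ) * (μ - l)) := hBD
      _ = (L - μ) * (μ - l) * d := by ring
  have hμpos : 0 < μ := lt_of_lt_of_le hlpos hlμ
  have hθpos : 0 < θ := lt_of_lt_of_le one_pos hθ
  have hsθpos : 0 < Real.sqrt θ := Real.sqrt_pos.2 hθpos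
  have hsθ : Real.sqrt θ ^ 2 = θ := Real.sq_sqrt hθpos.le
  have hB : 0 ≤ (θ - 1) / (2 * Real.sqrt θ) * μ := by
    apply mul_nonneg _ hμpos.le
    apply div_nonneg (by linarith) (by linarith)
  clear hident hBD hμc hμ hv hwsum hcmp hcpos hlc hcL hwpos hpath hsum hminpos hnn hflow hd
  have hkey : v ≤ ((θ - 1) / (2 * Real.sqrt θ) * μ) ^ 2 := by
    have h1 : 4 * θ * ((L - μ) * (μ - l)) ≤ (θ - 1) ^ 2 * μ ^ 2 := by
      nlinarith [sq_nonneg ((θ + 1) * μ - 2 * θ * l),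
        mul_nonneg (sub_nonneg.2 hLl) (sub_nonneg.2 hlμ),
        mul_nonneg (mul_nonneg hθpos.le (sub_nonneg.2 hLl)) (sub_nonneg.2 hlμ)]
    have h2 : ((θ - 1) / (2 * Real.sqrt θ) * μ) ^ 2 = (θ - 1) ^ 2 * μ ^ 2 / (4 * θ) := by
      field_simp
      nlinarith [hsθ]
    have h3 : 4 * θ * v ≤ 4 * θ * ((L - μ) * (μ - l)) :=
      mul_le_mul_of_nonneg_left hvle (by linarith)
    rw [h2, le_div_iff₀ (by linarith : (0:ℝ) < 4 * θ)]
    linarith [h1, h3]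
  calc Real.sqrt v ≤ Real.sqrt (((θ - 1) / (2 * Real.sqrt θ) * μ) ^ 2) :=
        Real.sqrt_le_sqrt hkey
    _ = (θ - 1) / (2 * Real.sqrt θ) * μ := Real.sqrt_sq hB
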